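/- arXiv:1012.0255 — 6 statements merged into one kernel-verified Lean document; each statement's English description precedes it below -/
import Mathlib

section
/- Let $k \ge 2$ and let $Z$ be the $k \times k$ grid graph, and let $\Gamma$ denote the set of $k$ vertices in the first row of $Z$. Then for every partition $(A,B)$ of the vertex set of $Z$ with both $A$ and $B$ nonempty, the number of edges of $Z$ with one endpoint in $A$ and one endpoint in $B$ is at least $\min\{|A\cap\Gamma|, |B\cap\Gamma|\} + 1$. -/
/-- The `m × n` grid graph on vertex set `Fin m × Fin n`: vertices are adjacent
iff they agree in one coordinate and differ by exactly one in the other. -/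
def rectGrid (m n : ℕ) : SimpleGraph (Fin m × Fin n) where
  Adj u v := (u.1 = v.1 ∧ (u.2.val + 1 = v.2.val ∨ v.2.val + 1 = u.2.val)) ∨
             (u.2 = v.2 ∧ (u.1.val + 1 = v.1.val ∨ v.1.val + 1 = u.1.val))
  symm := by
    constructor
    rintro u v (⟨h, h'⟩ | ⟨h, h'⟩)
    · exact Or.inl ⟨h.symm, h'.symm⟩
    · exact Or.inr ⟨h.symm, h'.symm⟩
  loopless := by
    constructor
    rintro u (⟨-, h' | h'⟩ | ⟨-, h' | h'⟩) <;> omega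

/-- The `k × k` grid graph. -/
def gridGraph (k : ℕ) : SimpleGraph (Fin k × Fin k) := rectGrid k k

/-- The set of edges of `G` with one endpoint in `A` and one endpoint in `B`. -/
def cutSet {V : Type*} (G : SimpleGraph V) (A B : Set V) : Set (Sym2 V) :=
  {e | ∃ u v, G.Adj u v ∧ u ∈ A ∧ v ∈ B ∧ e = s(u, v)}

/-!
Call a row or column *mixed* if it meets both `A` and its complement. A row or column is a path,
so a mixed one contains an edge of the cut, and no edge lies in two rows or columns: the cut has at
least as many edges as there are mixed rows and columns. If every row, or every column, is mixed
this is already `k > min (|A ∩ Γ|, |B ∩ Γ|)`. Otherwise some row and some column are unmixed; they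
share a vertex, hence lie entirely in the same part, say `A`. Then every column whose top vertex
is in `B` is mixed, and so is the row of any vertex of `B`, giving `|B ∩ Γ| + 1` mixed lines.
-/

open SimpleGraph

theorem SimpleGraph.Preconnected.exists_adj_mem_notMem {V : Type*} {G : SimpleGraph V}
    (hG : G.Preconnected) {S : Set V} {u v : V} (hu : u ∈ S) (hv : v ∉ S) :
    ∃ x y, G.Adj x y ∧ x ∈ S ∧ y ∉ S := by
  obtain ⟨p⟩ := hG u v
  obtain ⟨d, -, hd₁, hd₂⟩ := p.exists_boundary_dart S hu hv
  exact ⟨d.fst, d.snd, d.adj, hd₁, hd₂⟩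

theorem rectGrid_eq_boxProd (m n : ℕ) : rectGrid m n = pathGraph m □ pathGraph n := by
  ext u v
  simp only [rectGrid, boxProd_adj, pathGraph_adj]
  tauto

theorem Set.ncard_sep_fst_eq {α β : Type*} (A : Set (α × β)) (a : α) :
    {u ∈ A | u.1 = a}.ncard = {b | (a, b) ∈ A}.ncard := by
  rw [← Set.ncard_image_of_injective {b | (a, b) ∈ A} (Prod.mk_right_injective a)]
  congr 1
  ext ⟨x, y⟩
  constructor
  · rintro ⟨hxy, rfl⟩
    exact ⟨y, hxy, rfl⟩
  · rintro ⟨y, hy, ⟨⟩⟩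
    exact ⟨hy, rfl⟩

section Mixed

variable {α β : Type*}

def MixedRow (A : Set (α × β)) (a : α) : Prop := ∃ b b', (a, b) ∈ A ∧ (a, b') ∉ A

def MixedCol (A : Set (α × β)) (b : β) : Prop := ∃ a a', (a, b) ∈ A ∧ (a', b) ∉ A

@[simp]
theorem mixedRow_compl {A : Set (α × β)} {a : α} : MixedRow Aᶜ a ↔ MixedRow A a := by
  simp only [MixedRow, Set.mem_compl_iff, not_not]
  exact ⟨fun ⟨b, b', h, h'⟩ => ⟨b', b, h', h⟩, fun ⟨b, b', h, h'⟩ => ⟨b', b, h', h⟩⟩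

@[simp]
theorem mixedCol_compl {A : Set (α × β)} {b : β} : MixedCol Aᶜ b ↔ MixedCol A b := by
  simp only [MixedCol, Set.mem_compl_iff, not_not]
  exact ⟨fun ⟨a, a', h, h'⟩ => ⟨a', a, h', h⟩, fun ⟨a, a', h, h'⟩ => ⟨a', a, h', h⟩⟩

theorem not_mixedRow_iff {A : Set (α × β)} {a : α} :
    ¬MixedRow A a ↔ ∀ b b', (a, b) ∈ A → (a, b') ∈ A := by
  simp only [MixedRow, not_exists, not_and, not_not]

theorem not_mixedCol_iff {A : Set (α × β)} {b : β} :
    ¬MixedCol A b ↔ ∀ a a', (a, b) ∈ A → (a', b) ∈ A := by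
  simp only [MixedCol, not_exists, not_and, not_not]

variable [Finite α] [Finite β] {A : Set (α × β)}

theorem ncard_mixedRow_add_ncard_mixedCol_le_ncard_cutSet {G : SimpleGraph α}
    {H : SimpleGraph β} (hG : G.Preconnected) (hH : H.Preconnected) (A : Set (α × β)) :
    {a | MixedRow A a}.ncard + {b | MixedCol A b}.ncard ≤ (cutSet (G □ H) A Aᶜ).ncard := by
  classical
  cases nonempty_fintype α
  cases nonempty_fintype β
  simp only [Set.ncard_eq_toFinset_card', ← Finset.card_disjSum]
  -- Match each mixed line with a cut edge lying in it; no edge lies in two lines.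
  refine Finset.card_le_card_of_forall_subsingleton
    (fun l e => ∀ v ∈ e, Sum.elim (fun a => v.1 = a) (fun b => v.2 = b) l) ?_ ?_
  · rintro (a | b) hl
    · obtain ⟨b, b', hb, hb'⟩ : MixedRow A a := by simpa using hl
      obtain ⟨x, y, hxy, hx, hy⟩ := hH.exists_adj_mem_notMem (S := {b | (a, b) ∈ A}) hb hb'
      refine ⟨s((a, x), (a, y)), ?_, ?_⟩
      · simpa using ⟨_, _, boxProd_adj_right.2 hxy, hx, hy, rfl⟩
      · simp
    · obtain ⟨a, a', ha, ha'⟩ : MixedCol A b := by simpa using hl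
      obtain ⟨x, y, hxy, hx, hy⟩ := hG.exists_adj_mem_notMem (S := {a | (a, b) ∈ A}) ha ha'
      refine ⟨s((x, b), (y, b)), ?_, ?_⟩
      · simpa using ⟨_, _, boxProd_adj_left.2 hxy, hx, hy, rfl⟩
      · simp
  · intro e he l hl l' hl'
    obtain ⟨u, v, huv, -, -, rfl⟩ : e ∈ cutSet (G □ H) A Aᶜ := by simpa using he
    have hne : u ≠ v := huv.ne
    rcases l with a | b <;> rcases l' with a' | b' <;> grind [Prod.ext_iff]

theorem ncard_row_notMem_add_one_le (r : α) {a₀ : α} {b₀ : β} (hrow : ∀ b, (a₀, b) ∈ A)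
    (hcol : ∀ a, (a, b₀) ∈ A) {v : α × β} (hv : v ∉ A) :
    {b | (r, b) ∉ A}.ncard + 1 ≤ {a | MixedRow A a}.ncard + {b | MixedCol A b}.ncard := by
  have hcols : {b | (r, b) ∉ A} ⊆ {b | MixedCol A b} := fun b hb => ⟨a₀, r, hrow b, hb⟩
  have hrows : {a | MixedRow A a}.Nonempty := ⟨v.1, b₀, v.2, hcol v.1, hv⟩
  have := Set.ncard_le_ncard hcols
  have := (Set.ncard_pos (Set.toFinite _)).2 hrows
  omega

theorem min_ncard_row_add_one_le (hcard : Nat.card β ≤ Nat.card α) (hA : A.Nonempty)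
    (hAc : Aᶜ.Nonempty) (r : α) :
    min {b | (r, b) ∈ A}.ncard {b | (r, b) ∉ A}.ncard + 1 ≤
      {a | MixedRow A a}.ncard + {b | MixedCol A b}.ncard := by
  have : Nonempty β := ⟨hA.some.2⟩
  have hsplit : {b | (r, b) ∈ A}.ncard + {b | (r, b) ∉ A}.ncard = Nat.card β :=
    Set.ncard_add_ncard_compl _
  have hmin : min {b | (r, b) ∈ A}.ncard {b | (r, b) ∉ A}.ncard + 1 ≤ Nat.card β := by
    have := Nat.card_pos (α := β)
    omega
  by_cases hrows : ∀ a, MixedRow A a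
  · rw [show {a | MixedRow A a} = Set.univ from Set.eq_univ_of_forall hrows, Set.ncard_univ]
    omega
  by_cases hcols : ∀ b, MixedCol A b
  · rw [show {b | MixedCol A b} = Set.univ from Set.eq_univ_of_forall hcols, Set.ncard_univ]
    omega
  obtain ⟨a₀, ha₀⟩ := not_forall.1 hrows
  obtain ⟨b₀, hb₀⟩ := not_forall.1 hcols
  by_cases h₀ : (a₀, b₀) ∈ A
  · obtain ⟨v, hv⟩ := hAc
    have := ncard_row_notMem_add_one_le r (fun b => not_mixedRow_iff.1 ha₀ b₀ b h₀)
      (fun a => not_mixedCol_iff.1 hb₀ a₀ a h₀) hv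
    omega
  · obtain ⟨v, hv⟩ := hA
    have := ncard_row_notMem_add_one_le (A := Aᶜ) r
      (fun b => not_mixedRow_iff.1 (mixedRow_compl.not.2 ha₀) b₀ b h₀)
      (fun a => not_mixedCol_iff.1 (mixedCol_compl.not.2 hb₀) a₀ a h₀) (not_not.2 hv)
    simp only [Set.mem_compl_iff, not_not, mixedRow_compl, mixedCol_compl] at this
    omega

end Mixed

theorem grid_cut_lower_bound_general (k : ℕ) (A B : Set (Fin k × Fin k))
    (hU : A ∪ B = Set.univ) (hd : Disjoint A B)
    (hA : A.Nonempty) (hB : B.Nonempty) :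
    min ({u ∈ A | u.1.val = 0}.ncard) ({u ∈ B | u.1.val = 0}.ncard) + 1 ≤
      (cutSet (gridGraph k) A B).ncard := by
  obtain rfl : B = Aᶜ := (IsCompl.compl_eq ⟨hd, codisjoint_iff.2 hU⟩).symm
  let top : Fin k := ⟨0, hA.some.1.pos⟩
  have htop (S : Set (Fin k × Fin k)) : {u ∈ S | u.1.val = 0} = {u ∈ S | u.1 = top} := by
    simp only [Fin.ext_iff]
    rfl
  rw [htop, htop, Set.ncard_sep_fst_eq, Set.ncard_sep_fst_eq, gridGraph, rectGrid_eq_boxProd]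
  calc _ ≤ {a | MixedRow A a}.ncard + {b | MixedCol A b}.ncard :=
        min_ncard_row_add_one_le le_rfl hA hB top
    _ ≤ _ := ncard_mixedRow_add_ncard_mixedCol_le_ncard_cutSet (pathGraph_preconnected k)
        (pathGraph_preconnected k) A

/-- Claim: in the `k × k` grid (`k ≥ 2`), any partition `(A, B)` of the vertices into
two nonempty parts cuts at least `min {|A ∩ Γ|, |B ∩ Γ|} + 1` edges, where `Γ` is the
set of vertices of the first row. -/
theorem grid_cut_lower_bound (k : ℕ) (hk : 2 ≤ k) (A B : Set (Fin k × Fin k))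
    (hU : A ∪ B = Set.univ) (hd : Disjoint A B)
    (hA : A.Nonempty) (hB : B.Nonempty) :
    min ({u ∈ A | u.1.val = 0}.ncard) ({u ∈ B | u.1.val = 0}.ncard) + 1 ≤
      (cutSet (gridGraph k) A B).ncard :=
  grid_cut_lower_bound_general k A B hU hd hA hB
end

section
/- Let $k \ge 2$ and let $Z$ be the $k \times k$ grid graph with $\Gamma$ the set of vertices of its first row. Let $(A,B)$ be any partition of the vertex set of $Z$, and write $\Gamma_A = \Gamma\cap A$, $\Gamma_B = \Gamma\cap B$. If $|\Gamma_B| \le |\Gamma_A|$, then $|B| \le 4\,|E(A,B)|^2$, where $E(A,B)$ is the set of edges of $Z$ with one endpoint in $A$ and one in $B$. -/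
/-
Each column and each row of the grid is a path, so a line that is mixed (meets both `A` and
`B`) contains an edge of the cut, and distinct lines give distinct edges. If every column meets
`B`, then every first-row vertex of `A` lies on a mixed column, so the hypothesis on the first
row gives `k ≤ 2 |E(A,B)|`. Otherwise some column lies in `A`, so every row meets `A`. If
moreover some column lies in `B`, every row is mixed and `k ≤ |E(A,B)|`; if not, every vertex
of `B` lies on a mixed row and a mixed column, so `|B| ≤ |E(A,B)|²`.
-/

open SimpleGraph

theorem SimpleGraph.Preconnected.exists_adj_mem_not_mem {W : Type*} {H : SimpleGraph W}
    (hH : H.Preconnected) {S : Set W} {a b : W} (ha : a ∈ S) (hb : b ∉ S) :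
    ∃ x y, H.Adj x y ∧ x ∈ S ∧ y ∉ S := by
  obtain ⟨p⟩ := hH a b
  obtain ⟨d, -, hd₁, hd₂⟩ := p.exists_boundary_dart S ha hb
  exact ⟨d.fst, d.snd, d.adj, hd₁, hd₂⟩

theorem ncard_setOf_meets_both_le_ncard_cutSet {ι V W : Type*} [Finite V] {G : SimpleGraph V}
    {H : SimpleGraph W} (hH : H.Preconnected) (φ : ι → H →g G)
    (hφ : Pairwise fun i j => Disjoint (Set.range (φ i)) (Set.range (φ j))) (B : Set V) :
    {i | (∃ w, φ i w ∉ B) ∧ ∃ w, φ i w ∈ B}.ncard ≤ (cutSet G Bᶜ B).ncard := by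
  set S := {i | (∃ w, φ i w ∉ B) ∧ ∃ w, φ i w ∈ B}
  rcases S.eq_empty_or_nonempty with hS | ⟨-, ⟨w, -⟩, -⟩
  · simp [hS]
  -- `choose!` below needs `W` inhabited to return non-dependent functions.
  have : Nonempty W := ⟨w⟩
  have hcut : ∀ i ∈ S, ∃ x y, H.Adj x y ∧ φ i x ∈ Bᶜ ∧ φ i y ∉ Bᶜ := by
    rintro i ⟨⟨a, ha⟩, b, hb⟩
    exact hH.exists_adj_mem_not_mem (S := φ i ⁻¹' Bᶜ) ha (not_not.mpr hb)
  choose! x y hxy hx hy using hcut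
  refine Set.ncard_le_ncard_of_injOn (fun i => s(φ i (x i), φ i (y i)))
    (fun i hi => ⟨_, _, (φ i).map_adj (hxy i hi), hx i hi, not_not.mp (hy i hi), rfl⟩) ?_
  intro i _ j _ hij
  by_contra hne
  refine Set.disjoint_left.mp (hφ hne) (Set.mem_range_self (x i)) ?_
  rcases Sym2.eq_iff.mp hij with ⟨h, -⟩ | ⟨h, -⟩ <;> exact h ▸ Set.mem_range_self _

namespace rectGrid

variable {m n : ℕ}

def col (m : ℕ) (j : Fin n) : pathGraph m →g rectGrid m n where
  toFun i := (i, j)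
  map_rel' h := Or.inr ⟨rfl, pathGraph_adj.mp h⟩

def row (n : ℕ) (i : Fin m) : pathGraph n →g rectGrid m n where
  toFun j := (i, j)
  map_rel' h := Or.inl ⟨rfl, pathGraph_adj.mp h⟩

def mixedCols (B : Set (Fin m × Fin n)) : Set (Fin n) :=
  {j | (∃ i, (i, j) ∉ B) ∧ ∃ i, (i, j) ∈ B}

def mixedRows (B : Set (Fin m × Fin n)) : Set (Fin m) :=
  {i | (∃ j, (i, j) ∉ B) ∧ ∃ j, (i, j) ∈ B}

theorem ncard_mixedCols_le (B : Set (Fin m × Fin n)) :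
    (mixedCols B).ncard ≤ (cutSet (rectGrid m n) Bᶜ B).ncard :=
  ncard_setOf_meets_both_le_ncard_cutSet (pathGraph_preconnected m) (col m)
    (fun _ _ hne => Set.disjoint_left.mpr <| by
      rintro _ ⟨i, rfl⟩ ⟨i', h⟩
      exact hne (congrArg Prod.snd h).symm) B

theorem ncard_mixedRows_le (B : Set (Fin m × Fin n)) :
    (mixedRows B).ncard ≤ (cutSet (rectGrid m n) Bᶜ B).ncard :=
  ncard_setOf_meets_both_le_ncard_cutSet (pathGraph_preconnected n) (row n)
    (fun _ _ hne => Set.disjoint_left.mpr <| by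
      rintro _ ⟨j, rfl⟩ ⟨j', h⟩
      exact hne (congrArg Prod.fst h).symm) B

theorem ncard_firstRow_compl_le {B : Set (Fin m × Fin n)} (hB : ∀ j, ∃ i, (i, j) ∈ B) :
    {u ∈ Bᶜ | u.1.val = 0}.ncard ≤ (mixedCols B).ncard := by
  refine Set.ncard_le_ncard_of_injOn Prod.snd (fun u hu => ⟨⟨u.1, hu.1⟩, hB u.2⟩) ?_
  rintro u ⟨-, hu⟩ v ⟨-, hv⟩ h
  exact Prod.ext (Fin.ext (hu.trans hv.symm)) h

theorem mixedRows_eq_univ {B : Set (Fin m × Fin n)} {j₀ j₁ : Fin n}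
    (hj₀ : ∀ i, (i, j₀) ∉ B) (hj₁ : ∀ i, (i, j₁) ∈ B) : mixedRows B = Set.univ :=
  Set.eq_univ_of_forall fun i => ⟨⟨j₀, hj₀ i⟩, j₁, hj₁ i⟩

theorem subset_mixedRows_prod_mixedCols {B : Set (Fin m × Fin n)} {j₀ : Fin n}
    (hj₀ : ∀ i, (i, j₀) ∉ B) (hB : ∀ j, ∃ i, (i, j) ∉ B) :
    B ⊆ mixedRows B ×ˢ mixedCols B :=
  fun u hu => ⟨⟨⟨j₀, hj₀ u.1⟩, u.2, hu⟩, hB u.2, u.1, hu⟩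

end rectGrid

theorem le_ncard_firstRow (k : ℕ) (B : Set (Fin k × Fin k)) :
    k ≤ {u ∈ B | u.1.val = 0}.ncard + {u ∈ Bᶜ | u.1.val = 0}.ncard := by
  calc k = (Set.univ : Set (Fin k)).ncard := by simp
    _ ≤ ({u ∈ B | u.1.val = 0} ∪ {u ∈ Bᶜ | u.1.val = 0}).ncard :=
      Set.ncard_le_ncard_of_injOn (fun j => (⟨0, j.pos⟩, j))
        (fun j _ => (em ((⟨0, j.pos⟩, j) ∈ B)).imp (⟨·, rfl⟩) (⟨·, rfl⟩))
        (fun _ _ _ _ h => congrArg Prod.snd h)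
    _ ≤ _ := Set.ncard_union_le _ _

open rectGrid in
theorem grid_small_side_bound_general (k : ℕ) (A B : Set (Fin k × Fin k))
    (hU : A ∪ B = Set.univ) (hd : Disjoint A B)
    (hΓ : {u ∈ B | u.1.val = 0}.ncard ≤ {u ∈ A | u.1.val = 0}.ncard) :
    B.ncard ≤ 4 * (cutSet (gridGraph k) A B).ncard ^ 2 := by
  obtain rfl : A = Bᶜ := (isCompl_iff.mpr ⟨hd, codisjoint_iff.mpr hU⟩).eq_compl
  rw [gridGraph]
  set c := (cutSet (rectGrid k k) Bᶜ B).ncard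
  have hBk : B.ncard ≤ k * k := by simpa using Set.ncard_le_card B
  suffices k ≤ 2 * c ∨ B.ncard ≤ c * c by rcases this with h | h <;> nlinarith
  by_cases hmeet : ∀ j, ∃ i, (i, j) ∈ B
  · have hrow := le_ncard_firstRow k B
    have hcols := (ncard_firstRow_compl_le hmeet).trans (ncard_mixedCols_le B)
    left; omega
  push Not at hmeet
  obtain ⟨j₀, hj₀⟩ := hmeet
  by_cases hfull : ∃ j, ∀ i, (i, j) ∈ B
  · obtain ⟨j₁, hj₁⟩ := hfull
    have hrows := ncard_mixedRows_le B
    rw [mixedRows_eq_univ hj₀ hj₁, Set.ncard_univ, Nat.card_eq_fintype_card, Fintype.card_fin]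
      at hrows
    left; omega
  push Not at hfull
  right
  calc B.ncard ≤ (mixedRows B ×ˢ mixedCols B).ncard :=
        Set.ncard_le_ncard (subset_mixedRows_prod_mixedCols hj₀ hfull)
    _ = (mixedRows B).ncard * (mixedCols B).ncard := Set.ncard_prod
    _ ≤ c * c := Nat.mul_le_mul (ncard_mixedRows_le B) (ncard_mixedCols_le B)

/-- Claim: in the `k × k` grid (`k ≥ 2`) with first row `Γ`, for any partition `(A, B)`
of the vertices with `|Γ ∩ B| ≤ |Γ ∩ A|`, we have `|B| ≤ 4 |E(A,B)|²`. -/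
theorem grid_small_side_bound (k : ℕ) (hk : 2 ≤ k) (A B : Set (Fin k × Fin k))
    (hU : A ∪ B = Set.univ) (hd : Disjoint A B)
    (hΓ : {u ∈ B | u.1.val = 0}.ncard ≤ {u ∈ A | u.1.val = 0}.ncard) :
    B.ncard ≤ 4 * (cutSet (gridGraph k) A B).ncard ^ 2 :=
  grid_small_side_bound_general k A B hU hd hΓ
end

section
/- Let $h \ge 1$ and let $R$ be the grid graph with $h+1$ rows, numbered $0$ (bottom) through $h$ (top), and $2h$ columns, numbered $1$ through $2h$. Then there exists a family of paths $P_1,\dots,P_{2h}$ in $R$ such that, for each $1 \le j \le 2h$, the path $P_j$ connects the bottom-row vertex in column $j$ to the top-row vertex in column $\lceil j/2 \rceil$, and every edge of $R$ belongs to at most $2$ of the paths $P_1,\dots,P_{2h}$. -/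
/-!
Route the bottom vertex of column `j` up column `j` to row `j / 2 + 1`, left along that row
to column `j / 2`, and then up column `j / 2` to the top. Every step of such a route increases
(row, −column) lexicographically, so the route is a path. An edge determines `j / 2` for
every route through it: a horizontal edge in row `r` lies only on routes with `j / 2 = r - 1`;
a vertical edge in column `c` lies, below row `c / 2 + 1`, only on the route `j = c` and,
above row `c`, only on routes with `j / 2 = c`. Hence each edge is shared by at most the two
routes `2q` and `2q + 1`.
-/

open SimpleGraph

namespace SimpleGraph.Walk

variable {V α : Type*} {G : SimpleGraph V} [Preorder α] {φ : V → α}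

theorem apply_start_le_of_mem_support {u v : V} (p : G.Walk u v)
    (hp : ∀ d ∈ p.darts, φ d.fst < φ d.snd) {x : V} (hx : x ∈ p.support) : φ u ≤ φ x := by
  induction p with
  | nil => rw [List.eq_of_mem_singleton hx]
  | cons hadj p ih =>
    rw [darts_cons, List.forall_mem_cons] at hp
    rcases List.mem_cons.mp (support_cons hadj p ▸ hx) with rfl | hx
    · exact le_rfl
    · exact hp.1.le.trans (ih hp.2 hx)

theorem isPath_of_strictMono_darts {u v : V} (p : G.Walk u v)
    (hp : ∀ d ∈ p.darts, φ d.fst < φ d.snd) : p.IsPath := by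
  induction p with
  | nil => exact .nil
  | cons hadj p ih =>
    rw [darts_cons, List.forall_mem_cons] at hp
    exact (ih hp.2).cons fun hu =>
      (hp.1.trans_le (p.apply_start_le_of_mem_support hp.2 hu)).false

end SimpleGraph.Walk

namespace rectGrid

variable {m n : ℕ}

def upWalk (c : Fin n) (a : ℕ) : (k : ℕ) → (hk : a + k < m) →
    (rectGrid m n).Walk (⟨a, by omega⟩, c) (⟨a + k, hk⟩, c)
  | 0, _ => .nil
  | k + 1, hk => (upWalk c a k (by omega)).concat
      (show (rectGrid m n).Adj _ _ from Or.inr ⟨rfl, Or.inl rfl⟩)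

def leftWalk (r : Fin m) (b : ℕ) : (k : ℕ) → (hk : b + k < n) →
    (rectGrid m n).Walk (r, ⟨b + k, hk⟩) (r, ⟨b, by omega⟩)
  | 0, _ => .nil
  | k + 1, hk => .cons (v := (r, ⟨b + k, by omega⟩))
      (show (rectGrid m n).Adj _ _ from Or.inl ⟨rfl, Or.inr rfl⟩)
      (leftWalk r b k (by omega))

theorem mem_darts_upWalk {c : Fin n} {a k : ℕ} {hk : a + k < m} {d : (rectGrid m n).Dart}
    (hd : d ∈ (upWalk c a k hk).darts) :
    d.fst.2 = c ∧ d.snd.2 = c ∧ d.fst.1.val + 1 = d.snd.1.val ∧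
      a ≤ d.fst.1.val ∧ d.snd.1.val ≤ a + k := by
  induction k with
  | zero => simp [upWalk] at hd
  | succ k ih =>
    rw [upWalk, Walk.darts_concat, List.concat_eq_append, List.mem_append,
      List.mem_singleton] at hd
    rcases hd with hd | rfl
    · have := ih hd
      omega
    · simp [add_assoc]

theorem mem_darts_leftWalk {r : Fin m} {b k : ℕ} {hk : b + k < n} {d : (rectGrid m n).Dart}
    (hd : d ∈ (leftWalk r b k hk).darts) :
    d.fst.1 = r ∧ d.snd.1 = r ∧ d.snd.2.val + 1 = d.fst.2.val ∧
      b ≤ d.snd.2.val ∧ d.fst.2.val ≤ b + k := by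
  induction k with
  | zero => simp [leftWalk] at hd
  | succ k ih =>
    rw [leftWalk, Walk.darts_cons, List.mem_cons] at hd
    rcases hd with rfl | hd
    · simp [add_assoc]
    · have := ih hd
      omega

def route (h : ℕ) (j : Fin (2 * h)) :
    (rectGrid (h + 1) (2 * h)).Walk (⟨0, h.succ_pos⟩, j)
      (Fin.last h, ⟨j.val / 2, (Nat.div_le_self _ _).trans_lt j.isLt⟩) :=
  have := j.isLt
  let turn : Fin (h + 1) := ⟨j.val / 2 + 1, by omega⟩
  ((upWalk j 0 (j.val / 2 + 1) (by omega)).copy (v' := (turn, j)) rfl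
      (by simp [turn])).append <|
    ((leftWalk turn (j.val / 2) (j.val - j.val / 2) (by omega)).copy (u' := (turn, j))
      (by ext <;> simp; omega) rfl).append <|
    (upWalk ⟨j.val / 2, by omega⟩ (j.val / 2 + 1) (h - (j.val / 2 + 1)) (by omega)).copy rfl
      (by ext <;> simp; omega)

theorem mem_darts_route {h : ℕ} {j : Fin (2 * h)} {d : (rectGrid (h + 1) (2 * h)).Dart}
    (hd : d ∈ (route h j).darts) :
    (d.fst.2.val = d.snd.2.val ∧ d.fst.1.val + 1 = d.snd.1.val ∧
      (d.fst.2.val = j ∧ d.fst.1.val ≤ j / 2 ∨ d.fst.2.val = j / 2 ∧ j / 2 < d.fst.1.val)) ∨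
    (d.fst.1.val = d.snd.1.val ∧ d.snd.2.val + 1 = d.fst.2.val ∧ d.fst.1.val = j / 2 + 1) := by
  simp only [route, Walk.darts_append, Walk.darts_copy, List.mem_append] at hd
  rcases hd with hd | hd | hd
  · obtain ⟨hfst, hsnd, hstep, -, hle⟩ := mem_darts_upWalk hd
    simp only [Fin.ext_iff] at hfst hsnd
    omega
  · obtain ⟨hfst, hsnd, hstep, -⟩ := mem_darts_leftWalk hd
    simp only [Fin.ext_iff] at hfst hsnd
    omega
  · obtain ⟨hfst, hsnd, hstep, hle, -⟩ := mem_darts_upWalk hd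
    simp only [Fin.ext_iff] at hfst hsnd
    omega

theorem route_isPath (h : ℕ) (j : Fin (2 * h)) : (route h j).IsPath :=
  (route h j).isPath_of_strictMono_darts (φ := fun v => toLex (v.1, OrderDual.toDual v.2))
    fun d hd => by
      have := mem_darts_route hd
      simp only [Prod.Lex.toLex_lt_toLex, OrderDual.toDual_lt_toDual, Fin.lt_def, Fin.ext_iff]
      omega

theorem div_two_eq_of_mem_edges_route {h : ℕ} {j j' : Fin (2 * h)}
    {e : Sym2 (Fin (h + 1) × Fin (2 * h))} (he : e ∈ (route h j).edges)
    (he' : e ∈ (route h j').edges) : j.val / 2 = j'.val / 2 := by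
  obtain ⟨d, hd, rfl⟩ := List.mem_map.mp ((route h j).edges_eq_map_darts ▸ he)
  obtain ⟨d', hd', hdd'⟩ := List.mem_map.mp ((route h j').edges_eq_map_darts ▸ he')
  have hd_spec := mem_darts_route hd
  rcases (dart_edge_eq_iff d' d).mp hdd' with rfl | rfl
  · have hd'_spec := mem_darts_route hd'
    omega
  · have hd'_spec := mem_darts_route hd'
    simp only [Dart.symm_toProd, Prod.fst_swap, Prod.snd_swap] at hd'_spec
    omega

end rectGrid

theorem Fin.ncard_le_two_of_div_two_eq {n : ℕ} {S : Set (Fin n)}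
    (hS : ∀ j ∈ S, ∀ j' ∈ S, j.val / 2 = j'.val / 2) : S.ncard ≤ 2 := by
  obtain rfl | ⟨j₀, hj₀⟩ := S.eq_empty_or_nonempty
  · simp
  calc S.ncard ≤ ({2 * (j₀.val / 2), 2 * (j₀.val / 2) + 1} : Set ℕ).ncard :=
        Set.ncard_le_ncard_of_injOn Fin.val (fun j hj => by
          have := hS j hj j₀ hj₀
          simp only [Set.mem_insert_iff, Set.mem_singleton_iff]
          omega) Fin.val_injective.injOn
    _ = 2 := Set.ncard_pair (by omega)

/-- Column `j : Fin (2 * h)` is column `j + 1` of the 1-indexed statement, and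
`⌈(j + 1) / 2⌉ - 1 = j / 2`. -/
theorem grid_routing_congestion_two (h : ℕ) :
    ∃ P : (j : Fin (2 * h)) → (rectGrid (h + 1) (2 * h)).Walk
        (⟨0, by omega⟩, j) (⟨h, by omega⟩, ⟨j.val / 2, by have := j.isLt; omega⟩),
      (∀ j, (P j).IsPath) ∧
      (∀ e : Sym2 (Fin (h + 1) × Fin (2 * h)),
        {j : Fin (2 * h) | e ∈ (P j).edges}.ncard ≤ 2) :=
  ⟨rectGrid.route h, rectGrid.route_isPath h, fun _ => Fin.ncard_le_two_of_div_two_eq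
    fun _ hj _ hj' => rectGrid.div_two_eq_of_mem_edges_route hj hj'⟩
end

section
/- Let $G$ be a finite graph and let $\mathcal{Z}$ be a collection of pairwise disjoint subsets of $V(G)$ such that for each $Z\in\mathcal{Z}$: $G[Z]$ is a $k_Z\times k_Z$ grid with $k_Z\ge 2$; every vertex in the first row of the grid $G[Z]$ is incident to exactly one edge of $\mathrm{out}_G(Z)$; and no other vertex of $Z$ is incident to an edge of $\mathrm{out}_G(Z)$. Let $s,t$ be two vertices of $G$ not belonging to any $Z\in\mathcal{Z}$, and let $(A,B)$ be a minimum edge cut separating $s$ from $t$ (i.e., a partition of $V(G)$ with $s\in A$, $t\in B$ minimizing $|E(A,B)|$). Then both $A$ and $B$ are canonical for $\mathcal{Z}$: for every $Z\in\mathcal{Z}$, either $Z\subseteq A$ or $Z\subseteq B$. -/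
/-- Ordered version of `cutSet`: for disjoint `X`, `Y` it is in bijection with `cutSet G X Y`
(`ncard_cutSet`), and it is easier to count. -/
def crossPairs {V : Type*} (G : SimpleGraph V) (X Y : Set V) : Set (V × V) :=
  {p | G.Adj p.1 p.2 ∧ p.1 ∈ X ∧ p.2 ∈ Y}

namespace crossPairs

variable {V W : Type*} (G : SimpleGraph V)

lemma mono {X X' Y Y' : Set V} (hX : X ⊆ X') (hY : Y ⊆ Y') :
    crossPairs G X Y ⊆ crossPairs G X' Y' :=
  fun _ ⟨hadj, hu, hv⟩ => ⟨hadj, hX hu, hY hv⟩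

lemma ncard_comm (X Y : Set V) : (crossPairs G X Y).ncard = (crossPairs G Y X).ncard := by
  have : crossPairs G Y X = Prod.swap '' crossPairs G X Y := by
    ext ⟨u, v⟩
    simp only [crossPairs, Set.mem_image, Set.mem_ofPred_eq, Prod.exists, Prod.swap_prod_mk,
      Prod.mk.injEq]
    constructor
    · rintro ⟨hadj, hu, hv⟩
      exact ⟨v, u, ⟨hadj.symm, hv, hu⟩, rfl, rfl⟩
    · rintro ⟨a, b, ⟨hadj, ha, hb⟩, rfl, rfl⟩
      exact ⟨hadj.symm, hb, ha⟩
  rw [this, Set.ncard_image_of_injective _ Prod.swap_injective]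

lemma ncard_compl (X : Set V) : (crossPairs G Xᶜ Xᶜᶜ).ncard = (crossPairs G X Xᶜ).ncard := by
  rw [compl_compl, ncard_comm]

lemma ncard_cutSet {X Y : Set V} (hd : Disjoint X Y) :
    (cutSet G X Y).ncard = (crossPairs G X Y).ncard := by
  have himg : cutSet G X Y = (fun p : V × V => s(p.1, p.2)) '' crossPairs G X Y := by
    ext e
    constructor
    · rintro ⟨u, v, h, hu, hv, rfl⟩
      exact ⟨(u, v), ⟨h, hu, hv⟩, rfl⟩
    · rintro ⟨⟨u, v⟩, ⟨h, hu, hv⟩, rfl⟩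
      exact ⟨u, v, h, hu, hv, rfl⟩
  rw [himg, Set.InjOn.ncard_image]
  rintro ⟨u, v⟩ ⟨-, hu, hv⟩ ⟨u', v'⟩ ⟨-, hu', hv'⟩ he
  simp only [Sym2.eq, Sym2.rel_iff', Prod.mk.injEq, Prod.swap_prod_mk] at he
  rcases he with ⟨rfl, rfl⟩ | ⟨rfl, -⟩
  · rfl
  · exact absurd hv' (Set.disjoint_left.mp hd hu)

lemma ncard_comap_le [Finite V] {H : SimpleGraph W} (φ : H ↪g G) (X Y : Set V) :
    (crossPairs H (φ ⁻¹' X) (φ ⁻¹' Y)).ncard ≤ (crossPairs G X Y).ncard :=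
  Set.ncard_le_ncard_of_injOn (Prod.map φ φ)
    (fun _ ⟨hadj, hu, hv⟩ => ⟨φ.map_adj_iff.2 hadj, hu, hv⟩)
    (φ.injective.prodMap φ.injective).injOn

lemma ncard_le_of_subsingleton [Finite V] {X Y T : Set V}
    (hT : ∀ u ∈ X, ∀ v ∈ Y, G.Adj u v → u ∈ T)
    (hY : ∀ u ∈ X, {v | v ∈ Y ∧ G.Adj u v}.Subsingleton) :
    (crossPairs G X Y).ncard ≤ T.ncard :=
  Set.ncard_le_ncard_of_injOn Prod.fst (fun _ ⟨hadj, hu, hv⟩ => hT _ hu _ hv hadj)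
    (fun p ⟨hadj, hu, hv⟩ _ ⟨hadj', _, hv'⟩ h1 =>
      Prod.ext h1 (hY _ hu ⟨hv, hadj⟩ ⟨hv', h1 ▸ hadj'⟩))

/-- Moving `Z` to the side of `X` deletes the pairs from `X ∩ Z` to `Z \ X` and creates at most
the pairs from `Z \ X` to the new complement. -/
lemma ncard_union_add_le [Finite V] (X Z : Set V) :
    (crossPairs G (X ∪ Z) (X ∪ Z)ᶜ).ncard + (crossPairs G (X ∩ Z) (Z \ X)).ncard ≤
      (crossPairs G X Xᶜ).ncard + (crossPairs G (Z \ X) (X ∪ Z)ᶜ).ncard := by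
  have hsub : crossPairs G (X ∩ Z) (Z \ X) ⊆ crossPairs G X Xᶜ :=
    mono G Set.inter_subset_left fun _ h => h.2
  have hcover : crossPairs G (X ∪ Z) (X ∪ Z)ᶜ ⊆
      (crossPairs G X Xᶜ \ crossPairs G (X ∩ Z) (Z \ X)) ∪ crossPairs G (Z \ X) (X ∪ Z)ᶜ := by
    rintro ⟨u, v⟩ ⟨hadj, hu, hv⟩
    simp only [Set.mem_compl_iff, Set.mem_union, not_or] at hv
    by_cases huX : u ∈ X
    · exact Or.inl ⟨⟨hadj, huX, hv.1⟩, fun h => hv.2 h.2.2.1⟩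
    · exact Or.inr ⟨hadj, ⟨hu.resolve_left huX, huX⟩, by simpa using hv⟩
  have := Set.ncard_le_ncard hcover
  have := Set.ncard_union_le (crossPairs G X Xᶜ \ crossPairs G (X ∩ Z) (Z \ X))
    (crossPairs G (Z \ X) (X ∪ Z)ᶜ)
  have := Set.ncard_le_ncard hsub
  rw [Set.ncard_sdiff hsub] at *
  omega

end crossPairs

lemma Fin.exists_mem_notMem_adjacent {n : ℕ} {S : Set (Fin n)} {a b : Fin n}
    (ha : a ∈ S) (hb : b ∉ S) :
    ∃ x ∈ S, ∃ y ∉ S, x.val + 1 = y.val ∨ y.val + 1 = x.val := by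
  wlog hab : a ≤ b generalizing S a b
  · obtain ⟨x, hx, y, hy, hxy⟩ := this (S := Sᶜ) hb (not_not.2 ha) (le_of_not_ge hab)
    exact ⟨y, not_not.1 hy, x, hx, hxy.symm⟩
  by_contra! h
  have hmem : ∀ m, a.val ≤ m → ∀ hm : m < n, (⟨m, hm⟩ : Fin n) ∈ S := by
    refine Nat.le_induction (fun _ => ha) fun m _ ih hm => ?_
    by_contra hm'
    exact (h _ (ih (by omega)) _ hm').1 rfl
  exact hb (hmem b.val hab b.isLt)

namespace gridGraph

variable {n : ℕ} (S : Set (Fin n × Fin n))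

def mixedCols : Set (Fin n) := {j | (∃ i, (i, j) ∈ S) ∧ ∃ i, (i, j) ∉ S}

def mixedRows : Set (Fin n) := {i | (∃ j, (i, j) ∈ S) ∧ ∃ j, (i, j) ∉ S}

lemma ncard_mixedCols_add_ncard_mixedRows_le :
    (mixedCols S).ncard + (mixedRows S).ncard ≤ (crossPairs (gridGraph n) S Sᶜ).ncard := by
  set C := crossPairs (gridGraph n) S Sᶜ
  set vert := {p ∈ C | p.1.2 = p.2.2}
  set horiz := {p ∈ C | p.1.1 = p.2.1}
  have hcols : mixedCols S ⊆ (fun p => p.1.2) '' vert := by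
    rintro j ⟨⟨i, hi⟩, ⟨i', hi'⟩⟩
    obtain ⟨x, hx, y, hy, hxy⟩ :=
      Fin.exists_mem_notMem_adjacent (S := {i | (i, j) ∈ S}) hi hi'
    exact ⟨((x, j), (y, j)), ⟨⟨Or.inr ⟨rfl, hxy⟩, hx, hy⟩, rfl⟩, rfl⟩
  have hrows : mixedRows S ⊆ (fun p => p.1.1) '' horiz := by
    rintro i ⟨⟨j, hj⟩, ⟨j', hj'⟩⟩
    obtain ⟨x, hx, y, hy, hxy⟩ :=
      Fin.exists_mem_notMem_adjacent (S := {j | (i, j) ∈ S}) hj hj'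
    exact ⟨((i, x), (i, y)), ⟨⟨Or.inl ⟨rfl, hxy⟩, hx, hy⟩, rfl⟩, rfl⟩
  have hdisj : Disjoint vert horiz := by
    refine Set.disjoint_left.2 fun p hv hh => ?_
    exact (gridGraph n).loopless.irrefl p.1 (Prod.ext hh.2 hv.2 ▸ hv.1.1)
  calc (mixedCols S).ncard + (mixedRows S).ncard
      ≤ vert.ncard + horiz.ncard :=
        add_le_add ((Set.ncard_le_ncard hcols).trans Set.ncard_image_le)
          ((Set.ncard_le_ncard hrows).trans Set.ncard_image_le)
    _ = (vert ∪ horiz).ncard := (Set.ncard_union_eq hdisj).symm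
    _ ≤ C.ncard := Set.ncard_le_ncard (Set.union_subset (fun _ h => h.1) fun _ h => h.1)

variable [NeZero n]

lemma min_ncard_firstRow_add_one_le_of_full_col (hSc : Sᶜ.Nonempty)
    (hfull : ∃ j, ∀ i, (i, j) ∈ S) :
    min (Prod.mk 0 ⁻¹' S).ncard (Prod.mk 0 ⁻¹' S)ᶜ.ncard + 1 ≤
      (crossPairs (gridGraph n) S Sᶜ).ncard := by
  obtain ⟨j₀, hj₀⟩ := hfull
  have hsize := Set.ncard_add_ncard_compl (Prod.mk (0 : Fin n) ⁻¹' S)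
  rw [Nat.card_fin] at hsize
  have hbound := ncard_mixedCols_add_ncard_mixedRows_le S
  by_cases hempty : ∃ j, ∀ i, (i, j) ∉ S
  · obtain ⟨j₁, hj₁⟩ := hempty
    have : mixedRows S = Set.univ :=
      Set.eq_univ_of_forall fun i => ⟨⟨j₀, hj₀ i⟩, ⟨j₁, hj₁ i⟩⟩
    rw [this, Set.ncard_univ, Nat.card_fin] at hbound
    have := NeZero.ne n
    omega
  · push Not at hempty
    have hcols : (Prod.mk 0 ⁻¹' S)ᶜ ⊆ mixedCols S := fun j hj => ⟨hempty j, ⟨0, hj⟩⟩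
    obtain ⟨⟨i, j⟩, hij⟩ := hSc
    have hrow : 0 < (mixedRows S).ncard :=
      (Set.ncard_pos (Set.toFinite _)).2 ⟨i, ⟨j₀, hj₀ i⟩, ⟨j, hij⟩⟩
    have := Set.ncard_le_ncard hcols
    omega

lemma min_ncard_firstRow_add_one_le (hS : S.Nonempty) (hSc : Sᶜ.Nonempty) :
    min (Prod.mk 0 ⁻¹' S).ncard (Prod.mk 0 ⁻¹' S)ᶜ.ncard + 1 ≤
      (crossPairs (gridGraph n) S Sᶜ).ncard := by
  by_cases hfull : ∃ j, ∀ i, (i, j) ∈ S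
  · exact min_ncard_firstRow_add_one_le_of_full_col S hSc hfull
  by_cases hempty : ∃ j, ∀ i, (i, j) ∉ S
  · have := min_ncard_firstRow_add_one_le_of_full_col Sᶜ (by rwa [compl_compl]) hempty
    rwa [crossPairs.ncard_compl, Set.preimage_compl, compl_compl, min_comm] at this
  push Not at hfull hempty
  have : mixedCols S = Set.univ :=
    Set.eq_univ_of_forall fun j => ⟨hempty j, hfull j⟩
  have hbound := ncard_mixedCols_add_ncard_mixedRows_le S
  rw [this, Set.ncard_univ, Nat.card_fin] at hbound
  have hsize := Set.ncard_add_ncard_compl (Prod.mk (0 : Fin n) ⁻¹' S)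
  rw [Nat.card_fin] at hsize
  have := NeZero.ne n
  omega

end gridGraph

def SimpleGraph.Embedding.ofSubtypeEquiv {V W : Type*} {G : SimpleGraph V} {H : SimpleGraph W}
    {Z : Set V} (f : Z ≃ W) (hf : ∀ u v : Z, G.Adj u v ↔ H.Adj (f u) (f v)) : H ↪g G where
  toFun w := f.symm w
  inj' := Subtype.val_injective.comp f.symm.injective
  map_rel_iff' {a b} := by simpa using hf (f.symm a) (f.symm b)

lemma SimpleGraph.Embedding.range_ofSubtypeEquiv {V W : Type*} {G : SimpleGraph V}
    {H : SimpleGraph W} {Z : Set V} (f : Z ≃ W) (hf : ∀ u v : Z, G.Adj u v ↔ H.Adj (f u) (f v)) :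
    Set.range (ofSubtypeEquiv f hf) = Z := by
  ext v
  refine ⟨?_, fun hv => ⟨f ⟨v, hv⟩, by simp [ofSubtypeEquiv]⟩⟩
  rintro ⟨w, rfl⟩
  exact (f.symm w).2

section Pocket

variable {V : Type*} [Finite V] {G : SimpleGraph V} {n : ℕ} [NeZero n] {φ : gridGraph n ↪g G}
  {Z : Set V}

lemma ncard_crossPairs_union_pocket_lt (hZ : Set.range φ = Z)
    (hout : ∀ w v, v ∉ Z → G.Adj (φ w) v → w.1 = 0)
    (hone : ∀ j, {v | v ∉ Z ∧ G.Adj (φ (0, j)) v}.Subsingleton)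
    {X : Set V} (hX : (φ ⁻¹' X).Nonempty) (hXc : (φ ⁻¹' X)ᶜ.Nonempty)
    (hmaj : (Prod.mk 0 ⁻¹' (φ ⁻¹' X))ᶜ.ncard ≤ (Prod.mk 0 ⁻¹' (φ ⁻¹' X)).ncard) :
    (crossPairs G (X ∪ Z) (X ∪ Z)ᶜ).ncard < (crossPairs G X Xᶜ).ncard := by
  subst hZ
  set B := (Prod.mk 0 ⁻¹' (φ ⁻¹' X))ᶜ
  have hexchange := crossPairs.ncard_union_add_le G X (Set.range φ)
  have hinside : min (Prod.mk 0 ⁻¹' (φ ⁻¹' X)).ncard B.ncard + 1 ≤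
      (crossPairs G (X ∩ Set.range φ) (Set.range φ \ X)).ncard := by
    refine (gridGraph.min_ncard_firstRow_add_one_le _ hX hXc).trans (le_of_eq_of_le ?_
      (crossPairs.ncard_comap_le G φ _ _))
    rw [Set.preimage_inter, Set.preimage_sdiff, Set.preimage_range, Set.inter_univ,
      ← Set.compl_eq_univ_sdiff]
  have houtside : (crossPairs G (Set.range φ \ X) (X ∪ Set.range φ)ᶜ).ncard ≤ B.ncard := by
    rw [← Set.ncard_image_of_injective B (φ.injective.comp (Prod.mk_right_injective 0))]
    refine crossPairs.ncard_le_of_subsingleton G ?_ ?_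
    · rintro _ ⟨⟨w, rfl⟩, hwX⟩ v hv hadj
      obtain ⟨i, j⟩ := w
      obtain rfl : i = 0 := hout _ v (fun h => hv (Or.inr h)) hadj
      exact ⟨j, hwX, rfl⟩
    · rintro _ ⟨⟨⟨i, j⟩, rfl⟩, -⟩ v ⟨hv, hadj⟩ w ⟨hw, hadj'⟩
      obtain rfl : i = 0 := hout _ v (fun h => hv (Or.inr h)) hadj
      exact hone j ⟨fun h => hv (Or.inr h), hadj⟩ ⟨fun h => hw (Or.inr h), hadj'⟩
  rw [min_eq_right hmaj] at hinside
  omega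

lemma subset_or_subset_compl_of_minimal_cut (hZ : Set.range φ = Z)
    (hout : ∀ w v, v ∉ Z → G.Adj (φ w) v → w.1 = 0)
    (hone : ∀ j, {v | v ∉ Z ∧ G.Adj (φ (0, j)) v}.Subsingleton)
    {s t : V} (hsZ : s ∉ Z) (htZ : t ∉ Z) {A : Set V} (hsA : s ∈ A) (htA : t ∉ A)
    (hmin : ∀ X, s ∈ X → t ∉ X → (crossPairs G A Aᶜ).ncard ≤ (crossPairs G X Xᶜ).ncard) :
    Z ⊆ A ∨ Z ⊆ Aᶜ := by
  by_contra! hsplit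
  have hX : (φ ⁻¹' A).Nonempty := by
    obtain ⟨v, hvZ, hvA⟩ := Set.not_subset.1 hsplit.2
    obtain ⟨w, rfl⟩ := hZ ▸ hvZ
    exact ⟨w, not_not.1 hvA⟩
  have hXc : (φ ⁻¹' A)ᶜ.Nonempty := by
    obtain ⟨v, hvZ, hvA⟩ := Set.not_subset.1 hsplit.1
    obtain ⟨w, rfl⟩ := hZ ▸ hvZ
    exact ⟨w, hvA⟩
  rcases le_total (Prod.mk 0 ⁻¹' (φ ⁻¹' A))ᶜ.ncard (Prod.mk 0 ⁻¹' (φ ⁻¹' A)).ncard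
    with hmaj | hmaj
  · exact (hmin (A ∪ Z) (Or.inl hsA) fun h => h.elim htA htZ).not_gt
      (ncard_crossPairs_union_pocket_lt hZ hout hone hX hXc hmaj)
  · have hlt := ncard_crossPairs_union_pocket_lt hZ hout hone (X := Aᶜ) hXc
      (by rwa [Set.preimage_compl, compl_compl]) (by simpa [Set.preimage_compl] using hmaj)
    rw [crossPairs.ncard_compl G A, ← crossPairs.ncard_compl G (Aᶜ ∪ Z)] at hlt
    exact (hmin (Aᶜ ∪ Z)ᶜ (fun h => h.elim (· hsA) hsZ) fun h => h (Or.inl htA)).not_gt hlt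

end Pocket

theorem minCut_canonical_general {V : Type*} [Fintype V] (G : SimpleGraph V)
    (𝒵 : Set (Set V))
    (hgrid : ∀ Z ∈ 𝒵, ∃ (k : ℕ), 2 ≤ k ∧ ∃ f : Z ≃ (Fin k × Fin k),
      (∀ u v : Z, G.Adj u v ↔ (gridGraph k).Adj (f u) (f v)) ∧
      (∀ u : Z, (f u).1.val = 0 → {v : V | v ∉ Z ∧ G.Adj u v}.ncard = 1) ∧
      (∀ u : Z, (f u).1.val ≠ 0 → ∀ v : V, v ∉ Z → ¬ G.Adj u v))
    (s t : V) (hs : ∀ Z ∈ 𝒵, s ∉ Z) (ht : ∀ Z ∈ 𝒵, t ∉ Z)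
    (A B : Set V) (hU : A ∪ B = Set.univ) (hd : Disjoint A B)
    (hsA : s ∈ A) (htB : t ∈ B)
    (hmin : ∀ A' B' : Set V, A' ∪ B' = Set.univ → Disjoint A' B' →
      s ∈ A' → t ∈ B' → (cutSet G A B).ncard ≤ (cutSet G A' B').ncard) :
    ∀ Z ∈ 𝒵, Z ⊆ A ∨ Z ⊆ B := by
  intro Z hZ
  obtain ⟨k, hk, f, hiso, hone, hno⟩ := hgrid Z hZ
  have : NeZero k := ⟨by omega⟩
  set φ := SimpleGraph.Embedding.ofSubtypeEquiv f hiso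
  have hrange : Set.range φ = Z := SimpleGraph.Embedding.range_ofSubtypeEquiv f hiso
  have hout : ∀ w v, v ∉ Z → G.Adj (φ w) v → w.1 = 0 := fun w v hv hadj => by
    by_contra h
    exact hno (f.symm w) (by rwa [f.apply_symm_apply, Ne, Fin.val_eq_zero_iff]) v hv hadj
  have hone' : ∀ j, {v | v ∉ Z ∧ G.Adj (φ (0, j)) v}.Subsingleton := fun j =>
    Set.ncard_le_one_iff_subsingleton.1
      (hone (f.symm (0, j)) (by rw [f.apply_symm_apply]; rfl)).le
  obtain rfl : B = Aᶜ := (IsCompl.of_eq hd.eq_bot hU).compl_eq.symm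
  have hmin' : ∀ X, s ∈ X → t ∉ X →
      (crossPairs G A Aᶜ).ncard ≤ (crossPairs G X Xᶜ).ncard := fun X hsX htX => by
    simpa only [crossPairs.ncard_cutSet G disjoint_compl_right] using
      hmin X Xᶜ (Set.union_compl_self X) disjoint_compl_right hsX htX
  exact subset_or_subset_compl_of_minimal_cut hrange hout hone' (hs Z hZ) (ht Z hZ) hsA htB hmin'

/-- Claim: let `𝒵` be a collection of pairwise disjoint vertex sets such that each
`G[Z]` is a `k_Z × k_Z` grid (`k_Z ≥ 2`), every first-row vertex of the grid is
incident to exactly one edge leaving `Z` and no other vertex of `Z` is incident to an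
edge leaving `Z`. If `s, t` lie in no `Z ∈ 𝒵` and `(A, B)` is a minimum edge cut
separating `s` from `t`, then both `A` and `B` are canonical for `𝒵`. -/
theorem minCut_canonical {V : Type*} [Fintype V] (G : SimpleGraph V)
    (𝒵 : Set (Set V)) (hdisj : 𝒵.Pairwise Disjoint)
    (hgrid : ∀ Z ∈ 𝒵, ∃ (k : ℕ), 2 ≤ k ∧ ∃ f : Z ≃ (Fin k × Fin k),
      (∀ u v : Z, G.Adj u v ↔ (gridGraph k).Adj (f u) (f v)) ∧
      (∀ u : Z, (f u).1.val = 0 → {v : V | v ∉ Z ∧ G.Adj u v}.ncard = 1) ∧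
      (∀ u : Z, (f u).1.val ≠ 0 → ∀ v : V, v ∉ Z → ¬ G.Adj u v))
    (s t : V) (hs : ∀ Z ∈ 𝒵, s ∉ Z) (ht : ∀ Z ∈ 𝒵, t ∉ Z)
    (A B : Set V) (hU : A ∪ B = Set.univ) (hd : Disjoint A B)
    (hsA : s ∈ A) (htB : t ∈ B)
    (hmin : ∀ A' B' : Set V, A' ∪ B' = Set.univ → Disjoint A' B' →
      s ∈ A' → t ∈ B' → (cutSet G A B).ncard ≤ (cutSet G A' B').ncard) :
    ∀ Z ∈ 𝒵, Z ⊆ A ∨ Z ⊆ B :=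
  minCut_canonical_general G 𝒵 hgrid s t hs ht A B hU hd hsA htB hmin
end

section
/- Let $G$ be a finite graph, $S \subseteq V(G)$, and let $\Gamma$ be the set of interface vertices of $S$ (vertices of $S$ incident to an edge of $\mathrm{out}_G(S)$). Assume every vertex of $\Gamma$ is incident to exactly one edge of $\mathrm{out}_G(S)$, and let $\beta > 0$. Suppose there is a family $\mathcal{P}$ of paths in the induced subgraph $G[S]$ containing, for every unordered pair $\{u,v\}$ of distinct vertices of $\Gamma$, a path connecting $u$ to $v$, such that every edge of $G[S]$ lies on at most $\beta|\Gamma|$ paths of $\mathcal{P}$. Then $S$ is $\frac{1}{2\beta}$-well-linked in $G$: for every partition $(S_1,S_2)$ of $S$, writing $T_i = \mathrm{out}_G(S_i)\cap\mathrm{out}_G(S)$, one has $|E(S_1,S_2)| \ge \frac{1}{2\beta}\min\{|T_1|,|T_2|\}$. -/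
/-- `out_G(J)`: the set of edges of `G` with exactly one endpoint in `J`. -/
def outSet {V : Type*} (G : SimpleGraph V) (J : Set V) : Set (Sym2 V) :=
  cutSet G J Jᶜ

/-- `J` is `α`-well-linked in `G`: for every partition `(J₁, J₂)` of `J`, writing
`Tᵢ = out(Jᵢ) ∩ out(J)`, we have `|E(J₁,J₂)| ≥ α · min {|T₁|, |T₂|}`. -/
def IsWellLinked {V : Type*} (G : SimpleGraph V) (α : ℝ) (J : Set V) : Prop :=
  ∀ J₁ J₂ : Set V, J₁ ∪ J₂ = J → Disjoint J₁ J₂ →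
    α * min ((outSet G J₁ ∩ outSet G J).ncard : ℝ)
            ((outSet G J₂ ∩ outSet G J).ncard : ℝ)
      ≤ ((cutSet G J₁ J₂).ncard : ℝ)

/-- `Γ(S)`: the interface vertices of `S`, i.e. the vertices of `S` incident to an
edge with the other endpoint outside `S`. -/
def interfaceSet {V : Type*} (G : SimpleGraph V) (S : Set V) : Set V :=
  {u ∈ S | ∃ v, v ∉ S ∧ G.Adj u v}

theorem cutSet_comm {V : Type*} (G : SimpleGraph V) (A B : Set V) :
    cutSet G A B = cutSet G B A := by
  ext e
  constructor <;>
  · rintro ⟨u, v, huv, hu, hv, rfl⟩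
    exact ⟨v, u, huv.symm, hv, hu, Sym2.eq_swap⟩

theorem SimpleGraph.Walk.exists_mem_edges_cutSet {V : Type*} {G : SimpleGraph V} {A B : Set V}
    (hAB : Disjoint A B) {u v : V} (p : G.Walk u v) (hu : u ∈ A) (hv : v ∈ B)
    (hp : ∀ w ∈ p.support, w ∈ A ∪ B) :
    ∃ e ∈ cutSet G A B, e ∈ p.edges := by
  obtain ⟨d, hd, hdA, hdA'⟩ := p.exists_boundary_dart A hu (hAB.notMem_of_mem_right hv)
  have hdB : d.snd ∈ B := (hp _ (p.dart_snd_mem_support_of_mem_darts hd)).resolve_left hdA'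
  exact ⟨d.edge, ⟨d.fst, d.snd, d.adj, hdA, hdB, rfl⟩, List.mem_map_of_mem hd⟩

theorem outSet_inter_outSet_subset_image {V : Type*} (G : SimpleGraph V) {A S : Set V}
    (hAS : A ⊆ S) :
    outSet G A ∩ outSet G S ⊆
      (fun p : V × V => s(p.1, p.2)) '' {p | p.1 ∈ A ∧ p.2 ∉ S ∧ G.Adj p.1 p.2} := by
  rintro _ ⟨⟨u, v, huv, hu, -, rfl⟩, ⟨u', v', -, -, hv', he⟩⟩
  rcases Sym2.eq_iff.mp he with ⟨rfl, rfl⟩ | ⟨rfl, -⟩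
  · exact ⟨(u, v), ⟨hu, hv', huv⟩, rfl⟩
  · exact absurd (hAS hu) hv'

theorem ncard_outSet_inter_outSet_le {V : Type*} [Finite V] (G : SimpleGraph V) {A S : Set V}
    (hAS : A ⊆ S) (hS : ∀ u ∈ interfaceSet G S, {v : V | v ∉ S ∧ G.Adj u v}.ncard ≤ 1) :
    (outSet G A ∩ outSet G S).ncard ≤ (interfaceSet G S ∩ A).ncard := by
  refine (Set.ncard_le_ncard (outSet_inter_outSet_subset_image G hAS)).trans
    ((Set.ncard_image_le (Set.toFinite _)).trans (Set.ncard_le_ncard_of_injOn Prod.fst ?_ ?_))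
  · rintro ⟨u, v⟩ ⟨hu, hv, huv⟩
    exact ⟨⟨hAS hu, v, hv, huv⟩, hu⟩
  · rintro ⟨u, v⟩ ⟨hu, hv, huv⟩ ⟨u', v'⟩ ⟨-, hv', hu'v'⟩ (rfl : u = u')
    have hsub := Set.ncard_le_one_iff_subsingleton.mp (hS u ⟨hAS hu, v, hv, huv⟩)
    rw [show v = v' from hsub ⟨hv, huv⟩ ⟨hv', hu'v'⟩]

theorem ncard_le_ncard_mul_of_forall_exists {α β : Type*} [Finite α] [Finite β]
    (r : α → β → Prop) {s : Set α} {t : Set β} {k : ℝ} (hs : ∀ a ∈ s, ∃ b ∈ t, r a b)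
    (ht : ∀ b ∈ t, ({a ∈ s | r a b}.ncard : ℝ) ≤ k) :
    (s.ncard : ℝ) ≤ t.ncard * k := by
  have hcover : s ⊆ ⋃ b ∈ t.toFinite.toFinset, {a ∈ s | r a b} := by
    intro a ha
    obtain ⟨b, hb, hab⟩ := hs a ha
    exact Set.mem_biUnion ((Set.Finite.mem_toFinset _).mpr hb) ⟨ha, hab⟩
  calc (s.ncard : ℝ) ≤ ∑ b ∈ t.toFinite.toFinset, ({a ∈ s | r a b}.ncard : ℝ) := by
        exact_mod_cast (Set.ncard_le_ncard hcover).trans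
          (t.toFinite.toFinset.set_ncard_biUnion_le _)
    _ ≤ ∑ _b ∈ t.toFinite.toFinset, k :=
        Finset.sum_le_sum fun b hb => ht b ((Set.Finite.mem_toFinset _).mp hb)
    _ = t.ncard * k := by
        rw [Finset.sum_const, nsmul_eq_mul, Set.ncard_eq_toFinset_card _ t.toFinite]

theorem ncard_prod_union_prod {α : Type*} [Finite α] {A B : Set α} (h : Disjoint A B) :
    (A ×ˢ B ∪ B ×ˢ A).ncard = 2 * (A.ncard * B.ncard) := by
  rw [Set.ncard_union_eq (Set.disjoint_prod.mpr (Or.inl h)), Set.ncard_prod, Set.ncard_prod]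
  ring

theorem two_mul_ncard_mul_ncard_le {V : Type*} [Finite V] (G : SimpleGraph V)
    {Γ S₁ S₂ : Set V} (hS : Disjoint S₁ S₂) (P : (u : V) → (v : V) → G.Walk u v)
    (hP : ∀ u ∈ Γ, ∀ v ∈ Γ, u ≠ v → ∀ w ∈ (P u v).support, w ∈ S₁ ∪ S₂) {k : ℝ}
    (hk : ∀ e : Sym2 V,
      ({p : V × V | p.1 ∈ Γ ∧ p.2 ∈ Γ ∧ p.1 ≠ p.2 ∧ e ∈ (P p.1 p.2).edges}.ncard : ℝ) ≤ k) :
    2 * ((Γ ∩ S₁).ncard * (Γ ∩ S₂).ncard : ℝ) ≤ (cutSet G S₁ S₂).ncard * k := by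
  have hΓ : Disjoint (Γ ∩ S₁) (Γ ∩ S₂) := hS.mono inf_le_right inf_le_right
  have hpair : ∀ p ∈ (Γ ∩ S₁) ×ˢ (Γ ∩ S₂) ∪ (Γ ∩ S₂) ×ˢ (Γ ∩ S₁),
      p.1 ∈ Γ ∧ p.2 ∈ Γ ∧ p.1 ≠ p.2 := by
    rintro p (⟨hu, hv⟩ | ⟨hu, hv⟩)
    · exact ⟨hu.1, hv.1, hΓ.ne_of_mem hu hv⟩
    · exact ⟨hu.1, hv.1, hΓ.symm.ne_of_mem hu hv⟩
  rw [← Nat.cast_ofNat, ← Nat.cast_mul, ← Nat.cast_mul, ← ncard_prod_union_prod hΓ]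
  refine ncard_le_ncard_mul_of_forall_exists (fun p e => e ∈ (P p.1 p.2).edges) ?_ ?_
  · rintro ⟨u, v⟩ hp
    have hsupp := hP u (hpair _ hp).1 v (hpair _ hp).2.1 (hpair _ hp).2.2
    rcases hp with ⟨hu, hv⟩ | ⟨hu, hv⟩
    · exact (P u v).exists_mem_edges_cutSet hS hu.2 hv.2 hsupp
    · rw [cutSet_comm]
      rw [Set.union_comm] at hsupp
      exact (P u v).exists_mem_edges_cutSet hS.symm hu.2 hv.2 hsupp
  · refine fun e _ => le_trans (Nat.cast_le.mpr (Set.ncard_le_ncard ?_ (Set.toFinite _))) (hk e)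
    rintro p ⟨hp, he⟩
    exact ⟨(hpair p hp).1, (hpair p hp).2.1, (hpair p hp).2.2, he⟩

theorem min_le_two_mul_of_mul_le_mul_add {a b m : ℝ} (ha : 0 ≤ a) (hb : 0 ≤ b) (hm : 0 ≤ m)
    (h : a * b ≤ m * (a + b)) : min a b ≤ 2 * m := by
  rcases le_total a b with hab | hab
  · rw [min_eq_left hab]; nlinarith
  · rw [min_eq_right hab]; nlinarith

/-- Claim: if every interface vertex of `S` has exactly one outgoing edge, and there
is a family of paths inside `G[S]` (one path per unordered pair of distinct interface
vertices, so `P u v` is the reverse of `P v u`) such that every edge lies on at most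
`β |Γ(S)|` of the (unordered) paths -- i.e. on at most `2 β |Γ(S)|` of the ordered
versions -- then `S` is `1/(2β)`-well-linked in `G`. -/
theorem congestion_implies_wellLinked {V : Type*} [Fintype V] (G : SimpleGraph V)
    (S : Set V) (β : ℝ) (hβ : 0 < β)
    (hone : ∀ u ∈ interfaceSet G S, {v : V | v ∉ S ∧ G.Adj u v}.ncard = 1)
    (hpaths : ∃ P : (u : V) → (v : V) → G.Walk u v,
      (∀ u ∈ interfaceSet G S, ∀ v ∈ interfaceSet G S, u ≠ v →
        (P u v).IsPath ∧ ∀ w ∈ (P u v).support, w ∈ S) ∧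
      (∀ u ∈ interfaceSet G S, ∀ v ∈ interfaceSet G S, u ≠ v →
        P u v = (P v u).reverse) ∧
      (∀ e : Sym2 V,
        ({p : V × V | p.1 ∈ interfaceSet G S ∧ p.2 ∈ interfaceSet G S ∧
            p.1 ≠ p.2 ∧ e ∈ (P p.1 p.2).edges}.ncard : ℝ)
          ≤ 2 * (β * (interfaceSet G S).ncard))) :
    IsWellLinked G (1 / (2 * β)) S := by
  obtain ⟨P, hP, -, hcong⟩ := hpaths
  intro S₁ S₂ hunion hdisj
  set Γ := interfaceSet G S
  have hΓ : Γ.ncard = (Γ ∩ S₁).ncard + (Γ ∩ S₂).ncard := by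
    rw [← Set.ncard_union_eq (hdisj.mono Set.inter_subset_right Set.inter_subset_right),
      ← Set.inter_union_distrib_left, hunion, Set.inter_eq_left.mpr fun u hu => hu.1]
  have hcount := two_mul_ncard_mul_ncard_le G hdisj P
    (fun u hu v hv huv => hunion ▸ (hP u hu v hv huv).2) hcong
  have hmin := min_le_two_mul_of_mul_le_mul_add (Nat.cast_nonneg (Γ ∩ S₁).ncard)
    (Nat.cast_nonneg (Γ ∩ S₂).ncard) (by positivity : 0 ≤ β * (cutSet G S₁ S₂).ncard)
    (by rw [hΓ, Nat.cast_add] at hcount; linarith)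
  have hone' : ∀ u ∈ Γ, {v : V | v ∉ S ∧ G.Adj u v}.ncard ≤ 1 := fun u hu => (hone u hu).le
  have hT₁ := ncard_outSet_inter_outSet_le G (hunion ▸ Set.subset_union_left) hone'
  have hT₂ := ncard_outSet_inter_outSet_le G (hunion ▸ Set.subset_union_right) hone'
  rw [one_div_mul_eq_div, div_le_iff₀ (by positivity)]
  calc _ ≤ min ((Γ ∩ S₁).ncard : ℝ) (Γ ∩ S₂).ncard := by gcongr
    _ ≤ _ := by linarith
end

section
/- Let $H$ be a finite graph, $S \subseteq V(H)$ with $|S| \ge 12\beta$ for some real $\beta \ge 1$. Suppose there is a family $\mathcal{P}$ of paths in $H$ containing, for every unordered pair of distinct vertices of $S$, a path connecting them, such that every vertex of $H$ lies on at most $\beta|S|$ paths of $\mathcal{P}$. Then for any two vertices $u, v \in V(H)$, at most one connected component $C$ of $H \setminus \{u,v\}$ satisfies $|V(C) \cap S| > 4\beta$. -/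
lemma my_ncard_sprod {α β : Type*} (s : Set α) (t : Set β) :
    (s ×ˢ t).ncard = s.ncard * t.ncard := by
  rw [← Nat.card_coe_set_eq, ← Nat.card_coe_set_eq, ← Nat.card_coe_set_eq,
    Nat.card_congr (Equiv.Set.prod s t), Nat.card_prod]

lemma my_walk_reachable {V : Type*} (H : SimpleGraph V) (s : Set V) :
    ∀ {a b : V} (W : H.Walk a b) (hW : ∀ x ∈ W.support, x ∈ s),
      (H.induce s).Reachable ⟨a, hW a W.start_mem_support⟩ ⟨b, hW b W.end_mem_support⟩ := by
  intro a b W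
  induction W with
  | nil => intro hW; rfl
  | @cons a c b h p ih =>
      intro hW
      have ha : a ∈ s := hW _ (SimpleGraph.Walk.start_mem_support _)
      have hc : c ∈ s := hW c (by simp)
      have hadj : (H.induce s).Adj ⟨a, ha⟩ ⟨c, hc⟩ := h
      exact hadj.reachable.trans (ih (fun x hx => hW x (by simp [hx])))

/-- Claim: if `|S| ≥ 12β` (with `β ≥ 1`) and there is a family of paths in `H`, one
per unordered pair of distinct vertices of `S` (so `P u v` is the reverse of `P v u`),
such that every vertex lies on at most `β |S|` of the (unordered) paths -- i.e. on at
most `2 β |S|` of the ordered versions -- then for any two vertices `u, v`, at most one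
connected component of `H ∖ {u, v}` contains more than `4β` vertices of `S`. -/
theorem at_most_one_large_component {V : Type*} [Fintype V] (H : SimpleGraph V)
    (S : Set V) (β : ℝ) (hβ : 1 ≤ β) (hScard : 12 * β ≤ (S.ncard : ℝ))
    (hpaths : ∃ P : (u : V) → (v : V) → H.Walk u v,
      (∀ u ∈ S, ∀ v ∈ S, u ≠ v → (P u v).IsPath) ∧
      (∀ u ∈ S, ∀ v ∈ S, u ≠ v → P u v = (P v u).reverse) ∧
      (∀ w : V,
        ({p : V × V | p.1 ∈ S ∧ p.2 ∈ S ∧ p.1 ≠ p.2 ∧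
            w ∈ (P p.1 p.2).support}.ncard : ℝ) ≤ 2 * (β * S.ncard)))
    (u v : V) :
    ∀ C C' : (H.induce {w : V | w ≠ u ∧ w ≠ v}).ConnectedComponent,
      4 * β < (({x : {w : V | w ≠ u ∧ w ≠ v} | (x : V) ∈ S ∧
          (H.induce {w : V | w ≠ u ∧ w ≠ v}).connectedComponentMk x = C}).ncard : ℝ) →
      4 * β < (({x : {w : V | w ≠ u ∧ w ≠ v} | (x : V) ∈ S ∧
          (H.induce {w : V | w ≠ u ∧ w ≠ v}).connectedComponentMk x = C'}).ncard : ℝ) →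
      C = C' := by
  obtain ⟨P, hPpath, hsym, hcong⟩ := hpaths
  set V' : Set V := {w : V | w ≠ u ∧ w ≠ v} with hV'def
  intro C C' hC hC'
  by_contra hne
  set T : Set V := Subtype.val '' {x : V' | (x : V) ∈ S ∧
      (H.induce V').connectedComponentMk x = C} with hTdef
  set T' : Set V := Subtype.val '' {x : V' | (x : V) ∈ S ∧
      (H.induce V').connectedComponentMk x = C'} with hT'def
  set B : Set V := (S ∩ V') \ T' with hBdef
  rw [← Set.ncard_image_of_injective _ Subtype.val_injective, ← hTdef] at hC
  rw [← Set.ncard_image_of_injective _ Subtype.val_injective, ← hT'def] at hC'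
  -- basic inclusions
  have hT'SV : T' ⊆ S ∩ V' := by
    rintro x ⟨x₀, hx₀, rfl⟩; exact ⟨hx₀.1, x₀.2⟩
  have hTB : T ⊆ B := by
    rintro x ⟨x₀, hx₀, rfl⟩
    refine ⟨⟨hx₀.1, x₀.2⟩, ?_⟩
    rintro ⟨y₀, hy₀, hxy⟩
    exact hne (hx₀.2 ▸ (congrArg _ (Subtype.val_injective hxy.symm)).trans hy₀.2)
  have hdisj : Disjoint T' B := Set.disjoint_sdiff_right
  -- key claim
  have hkey : ∀ a ∈ T', ∀ b ∈ B, u ∈ (P a b).support ∨ v ∈ (P a b).support := by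
    rintro a ⟨a₀, ha₀, rfl⟩ b hb
    by_contra hcon
    push_neg at hcon
    have hsupp : ∀ x ∈ (P ↑a₀ b).support, x ∈ V' :=
      fun x hx => ⟨fun h => hcon.1 (h ▸ hx), fun h => hcon.2 (h ▸ hx)⟩
    have hr := my_walk_reachable H V' (P ↑a₀ b) hsupp
    have hmkb : (H.induce V').connectedComponentMk ⟨b, hsupp b (P ↑a₀ b).end_mem_support⟩ = C' := by
      have h1 : (H.induce V').connectedComponentMk ⟨↑a₀, hsupp _ (P ↑a₀ b).start_mem_support⟩ = C' := ha₀.2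
      rw [← h1]
      exact (SimpleGraph.ConnectedComponent.sound hr).symm
    exact hb.2 ⟨⟨b, hsupp b (P ↑a₀ b).end_mem_support⟩, ⟨hb.1.1, hmkb⟩, rfl⟩
  -- pairs
  set Pr : Set (V × V) := T' ×ˢ B ∪ B ×ˢ T' with hPrdef
  have hPrsub : Pr ⊆ {p : V × V | p.1 ∈ S ∧ p.2 ∈ S ∧ p.1 ≠ p.2 ∧ u ∈ (P p.1 p.2).support} ∪
      {p : V × V | p.1 ∈ S ∧ p.2 ∈ S ∧ p.1 ≠ p.2 ∧ v ∈ (P p.1 p.2).support} := by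
    rintro ⟨a, b⟩ (⟨ha, hb⟩ | ⟨hb, ha⟩)
    · have hne' : a ≠ b := fun h => (hdisj.ne_of_mem ha hb) h
      rcases hkey a ha b hb with h | h
      · exact Or.inl ⟨(hT'SV ha).1, hb.1.1, hne', h⟩
      · exact Or.inr ⟨(hT'SV ha).1, hb.1.1, hne', h⟩
    · have hne' : a ≠ b := fun h => (hdisj.ne_of_mem ha hb) h.symm
      have hmem : ∀ w : V, w ∈ (P b a).support ↔ w ∈ (P a b).support := by
        intro w
        rw [hsym a hb.1.1 b (hT'SV ha).1 hne']
        simp [SimpleGraph.Walk.support_reverse]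
      rcases hkey b ha a hb with h | h
      · exact Or.inl ⟨hb.1.1, (hT'SV ha).1, hne', (hmem u).mp h⟩
      · exact Or.inr ⟨hb.1.1, (hT'SV ha).1, hne', (hmem v).mp h⟩
  -- counting
  have hPrcard : Pr.ncard = T'.ncard * B.ncard + B.ncard * T'.ncard := by
    rw [hPrdef, Set.ncard_union_eq ?_ (Set.toFinite _) (Set.toFinite _),
      my_ncard_sprod, my_ncard_sprod]
    refine Set.disjoint_left.mpr ?_
    rintro ⟨a, b⟩ ⟨ha, hb⟩ ⟨ha', hb'⟩
    exact Set.disjoint_left.mp hdisj ha ha'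
  have hPrle : (Pr.ncard : ℝ) ≤ 2 * (β * S.ncard) + 2 * (β * S.ncard) := by
    calc (Pr.ncard : ℝ) ≤ (({p : V × V | p.1 ∈ S ∧ p.2 ∈ S ∧ p.1 ≠ p.2 ∧ u ∈ (P p.1 p.2).support} ∪
          {p : V × V | p.1 ∈ S ∧ p.2 ∈ S ∧ p.1 ≠ p.2 ∧ v ∈ (P p.1 p.2).support}).ncard : ℝ) := by
          exact_mod_cast Nat.cast_le.mpr (Set.ncard_le_ncard hPrsub (Set.toFinite _))
      _ ≤ (({p : V × V | p.1 ∈ S ∧ p.2 ∈ S ∧ p.1 ≠ p.2 ∧ u ∈ (P p.1 p.2).support}).ncard : ℝ) +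
          (({p : V × V | p.1 ∈ S ∧ p.2 ∈ S ∧ p.1 ≠ p.2 ∧ v ∈ (P p.1 p.2).support}).ncard : ℝ) := by
          exact_mod_cast Nat.cast_le.mpr (Set.ncard_union_le _ _)
      _ ≤ _ := add_le_add (hcong u) (hcong v)
  -- size relations
  have hunion : T' ∪ B = S ∩ V' := by
    rw [hBdef]
    rw [Set.union_diff_self, Set.union_eq_self_of_subset_left hT'SV]
  have hxy : T'.ncard + B.ncard = (S ∩ V').ncard := by
    rw [← hunion, Set.ncard_union_eq hdisj (Set.toFinite _) (Set.toFinite _)]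
  have hScap : S.ncard ≤ (S ∩ V').ncard + 2 := by
    have h1 : S ⊆ (S ∩ V') ∪ {u, v} := by
      intro x hx
      by_cases hxu : x = u
      · exact Or.inr (Or.inl hxu)
      by_cases hxv : x = v
      · exact Or.inr (Or.inr hxv)
      · exact Or.inl ⟨hx, hxu, hxv⟩
    calc S.ncard ≤ ((S ∩ V') ∪ {u, v}).ncard := Set.ncard_le_ncard h1 (Set.toFinite _)
      _ ≤ (S ∩ V').ncard + ({u, v} : Set V).ncard := Set.ncard_union_le _ _
      _ ≤ (S ∩ V').ncard + 2 := by
          have h2 : ({u, v} : Set V).ncard ≤ 2 :=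
            le_trans (Set.ncard_insert_le u {v}) (by simp)
          omega
  have hy : T.ncard ≤ B.ncard := Set.ncard_le_ncard hTB (Set.toFinite _)
  -- final arithmetic
  have hy4 : 4 * β < (B.ncard : ℝ) := lt_of_lt_of_le hC (by exact_mod_cast hy)
  have hx4 : 4 * β < (T'.ncard : ℝ) := hC'
  have h2xy : 2 * ((T'.ncard : ℝ) * B.ncard) ≤ 4 * (β * S.ncard) := by
    have he : (Pr.ncard : ℝ) = (T'.ncard : ℝ) * B.ncard + (B.ncard : ℝ) * T'.ncard := by
      rw [hPrcard]; push_cast; ring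
    nlinarith [hPrle]
  have hsum : (S.ncard : ℝ) ≤ (T'.ncard : ℝ) + B.ncard + 2 := by
    have h3 : S.ncard ≤ T'.ncard + B.ncard + 2 := by rw [hxy]; exact hScap
    exact_mod_cast h3
  nlinarith [mul_pos (sub_pos.mpr hx4) (sub_pos.mpr hy4),
    mul_nonneg (by linarith : (0:ℝ) ≤ β) (by linarith : (0:ℝ) ≤ (S.ncard : ℝ) - 12 * β),
    mul_nonneg (by linarith : (0:ℝ) ≤ β) (by linarith : (0:ℝ) ≤ β - 1)]
end
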